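/- arXiv:2407.04783 — 2 statements merged into one kernel-verified Lean document; each statement's English description precedes it below -/
import Mathlib

section
/- There is an absolute constant c > 0 with the following property. Let X be a measurable space, F a nonempty finite family of probability measures on X, α, β ∈ (0,1), and n an integer with n ≥ c·(log|F| + log(1/β))/α². Then there exists a measurable function T : X^n → F such that for every probability measure g on X, g^{⊗n}( { S ∈ X^n : dtv(T(S), g) ≤ 3·dtv(g, F) + α } ) ≥ 1 − β. -/
open MeasureTheory ProbabilityTheory Matrix

/-- Total variation distance between two measures. -/
noncomputable def tvDist {X : Type*} [MeasurableSpace X] (μ ν : Measure X) : ℝ :=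
  ⨆ E : {E : Set X // MeasurableSet E}, |(μ E.1).toReal - (ν E.1).toReal|

/-- Total variation distance from a measure to a family of measures. -/
noncomputable def tvDistSet {X : Type*} [MeasurableSpace X] (g : Measure X)
    (F : Set (Measure X)) : ℝ :=
  ⨅ f : F, tvDist g f.1

/-- A `(C, α)`-accurate `(m, ρ, L)`-stable list decoder for `F`. -/
def IsStableListDecoder {X : Type*} [MeasurableSpace X] (F : Set (Measure X))
    (C α : ℝ) (m : ℕ) (ρ : ℝ) (L : ℝ)
    (A : (Fin m → X) → Set (Measure X)) : Prop :=
  (∀ S, (A S).Finite ∧ ((A S).ncard : ℝ) ≤ L ∧ ∀ μ ∈ A S, IsProbabilityMeasure μ) ∧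
  (∀ g : Measure X, IsProbabilityMeasure g →
    ∃ gt : Measure X, IsProbabilityMeasure gt ∧
      MeasurableSet {S : Fin m → X | gt ∈ A S} ∧
      ENNReal.ofReal ρ ≤ Measure.pi (fun _ : Fin m => g) {S | gt ∈ A S} ∧
      tvDist gt g ≤ α + C * tvDistSet g F)

instance {X : Type*} [MeasurableSpace X] : MeasurableSpace (ProbabilityMeasure X) :=
  inferInstanceAs (MeasurableSpace {μ : Measure X // IsProbabilityMeasure μ})

/-- `(ε, δ)`-differential privacy of a kernel on datasets of size `n`. -/
def IsDPKernel {X Y : Type*} [MeasurableSpace X] [MeasurableSpace Y] {n : ℕ}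
    (M : Kernel (Fin n → X) Y) (ε δ : ℝ) : Prop :=
  ∀ D D' : Fin n → X, (∃ i, D i ≠ D' i ∧ ∀ j, j ≠ i → D j = D' j) →
    ∀ E : Set Y, MeasurableSet E →
      M D E ≤ ENNReal.ofReal (Real.exp ε) * M D' E + ENNReal.ofReal δ

/-- `F` is `(ε,δ)`-privately `C`-agnostic `(n,α,β)`-learnable. -/
def PrivAgnosticLearnable {X : Type*} [MeasurableSpace X] (F : Set (Measure X))
    (ε δ C : ℝ) (n : ℕ) (α β : ℝ) : Prop :=
  ∃ M : Kernel (Fin n → X) (ProbabilityMeasure X), IsMarkovKernel M ∧ IsDPKernel M ε δ ∧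
    ∀ g : Measure X, IsProbabilityMeasure g →
      ENNReal.ofReal (1 - β) ≤
        ∫⁻ S, M S {f : ProbabilityMeasure X | tvDist (f : Measure X) g ≤ C * tvDistSet g F + α}
          ∂(Measure.pi fun _ : Fin n => g)

/-- The class of `k`-mixtures of `F`. -/
noncomputable def kmix {X : Type*} [MeasurableSpace X] (k : ℕ) (F : Set (Measure X)) :
    Set (Measure X) :=
  {ν | ∃ (w : Fin k → ℝ) (f : Fin k → Measure X),
    (∀ i, 0 ≤ w i) ∧ (∑ i, w i = 1) ∧ (∀ i, f i ∈ F) ∧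
    ν = ∑ i, ENNReal.ofReal (w i) • f i}

/-- Density of the `d`-dimensional Gaussian with mean `μ` and covariance `S`. -/
noncomputable def gaussianPdf (d : ℕ) (μ : Fin d → ℝ) (S : Matrix (Fin d) (Fin d) ℝ)
    (x : Fin d → ℝ) : ℝ :=
  (Real.sqrt ((2 * Real.pi) ^ d * S.det))⁻¹ *
    Real.exp (-(1 / 2) * ((x - μ) ⬝ᵥ (S⁻¹ *ᵥ (x - μ))))

/-- The family of `d`-dimensional Gaussian measures. -/
noncomputable def Gd (d : ℕ) : Set (Measure (Fin d → ℝ)) :=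
  {ν | ∃ (μ : Fin d → ℝ) (S : Matrix (Fin d) (Fin d) ℝ), S.PosDef ∧
    ν = volume.withDensity fun x => ENNReal.ofReal (gaussianPdf d μ S x)}

/-!
Minimum distance (Scheffé–Yatracos) estimation. For each ordered pair `(f, f')` of members of `F`
fix a test set on which `|f A - f' A|` nearly attains `tvDist f f'`, and output the member of `F`
whose values on the test sets are closest, in sup distance, to the empirical frequencies of the
sample. If every empirical frequency is within `ε` of its `g`-probability, the triangle inequality
gives `tvDist (T S) g ≤ 3 * tvDist f g + 2 * ε + η` for every `f ∈ F`, where `η` is the slack of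
the test sets. By Hoeffding's inequality and a union bound over the `|F|²` test sets this fails
with probability at most `2 |F|² exp (-2 n ε²)`, which is at most `β` for `ε = α / 4` once
`n ≥ 24 (log |F| + log (1 / β)) / α²` and `|F| ≥ 2`; when `|F| = 1` the estimator is constant
and the bound holds for every sample.
-/
section TotalVariation

variable {X : Type*} [MeasurableSpace X]

lemma tvDist_nonneg (μ ν : Measure X) : 0 ≤ tvDist μ ν :=
  Real.iSup_nonneg fun _ => abs_nonneg _

lemma tvDist_comm (μ ν : Measure X) : tvDist μ ν = tvDist ν μ := by
  simp only [tvDist, abs_sub_comm]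

lemma bddAbove_abs_measureReal_sub (μ ν : Measure X) [IsFiniteMeasure μ] [IsFiniteMeasure ν] :
    BddAbove (Set.range fun E : {E : Set X // MeasurableSet E} =>
      |(μ E.1).toReal - (ν E.1).toReal|) := by
  refine ⟨μ.real Set.univ + ν.real Set.univ, ?_⟩
  rintro _ ⟨E, rfl⟩
  change |μ.real E.1 - ν.real E.1| ≤ _
  have hμ : μ.real E.1 ≤ μ.real Set.univ := measureReal_mono (Set.subset_univ _)
  have hν : ν.real E.1 ≤ ν.real Set.univ := measureReal_mono (Set.subset_univ _)
  have := measureReal_nonneg (μ := μ) (s := E.1)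
  have := measureReal_nonneg (μ := ν) (s := E.1)
  exact abs_sub_le_iff.2 ⟨by linarith, by linarith⟩

lemma abs_measureReal_sub_le_tvDist (μ ν : Measure X) [IsFiniteMeasure μ] [IsFiniteMeasure ν]
    {E : Set X} (hE : MeasurableSet E) : |μ.real E - ν.real E| ≤ tvDist μ ν :=
  le_ciSup (bddAbove_abs_measureReal_sub μ ν) ⟨E, hE⟩

lemma tvDist_triangle (μ ν κ : Measure X) [IsFiniteMeasure μ] [IsFiniteMeasure ν]
    [IsFiniteMeasure κ] : tvDist μ ν ≤ tvDist μ κ + tvDist κ ν :=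
  ciSup_le fun E => (abs_sub_le _ _ _).trans <| add_le_add
    (abs_measureReal_sub_le_tvDist μ κ E.2) (abs_measureReal_sub_le_tvDist κ ν E.2)

lemma exists_measurableSet_tvDist_lt (μ ν : Measure X) {η : ℝ} (hη : 0 < η) :
    ∃ E, MeasurableSet E ∧ tvDist μ ν < |μ.real E - ν.real E| + η := by
  obtain ⟨E, hE⟩ := exists_lt_of_lt_ciSup (f := fun E : {E : Set X // MeasurableSet E} =>
    |(μ E.1).toReal - (ν E.1).toReal|) (sub_lt_self (tvDist μ ν) hη)
  exact ⟨E.1, E.2, sub_lt_iff_lt_add.1 hE⟩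

lemma exists_tvDist_eq_tvDistSet (g : Measure X) {F : Set (Measure X)} (hne : F.Nonempty)
    (hfin : F.Finite) : ∃ f ∈ F, tvDist g f = tvDistSet g F := by
  have : Nonempty F := hne.to_subtype
  have : Finite F := hfin
  obtain ⟨f, hf⟩ := exists_eq_ciInf_of_finite (f := fun f : F => tvDist g f.1)
  exact ⟨f.1, f.2, hf⟩

end TotalVariation

section Empirical

variable {X : Type*} {n : ℕ}

noncomputable def empiricalFreq (B : Set X) (S : Fin n → X) : ℝ :=
  (∑ i, B.indicator 1 (S i)) / n

lemma sum_indicator_sub_eq_mul (B : Set X) (p : ℝ) (S : Fin n → X) :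
    ∑ i, (B.indicator 1 (S i) - p) = n * (empiricalFreq B S - p) := by
  rcases Nat.eq_zero_or_pos n with rfl | hn
  · simp
  · simp only [empiricalFreq, Finset.sum_sub_distrib, Finset.sum_const, Finset.card_univ,
      Fintype.card_fin, nsmul_eq_mul]
    field_simp

variable [MeasurableSpace X]

lemma measurable_empiricalFreq {B : Set X} (hB : MeasurableSet B) :
    Measurable (empiricalFreq (n := n) B) :=
  (Finset.measurable_sum _ fun i _ =>
    (measurable_const.indicator hB).comp (measurable_pi_apply i)).div_const _

open Real in
lemma measureReal_le_sum_comp_eval_le (g : Measure X) [IsProbabilityMeasure g] {h : X → ℝ}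
    (hh : Measurable h) {c : NNReal} (hc : HasSubgaussianMGF h c g) {ε : ℝ} (hε : 0 ≤ ε) :
    (Measure.pi fun _ : Fin n => g).real {S | ε ≤ ∑ i, h (S i)} ≤
      exp (-ε ^ 2 / (2 * (n * c))) := by
  have hindep := iIndepFun_pi (μ := fun _ : Fin n => g) (X := fun _ => h)
    fun _ => hh.aemeasurable
  have hsubG : ∀ i : Fin n, HasSubgaussianMGF (fun S : Fin n → X => h (S i)) c
      (Measure.pi fun _ : Fin n => g) := fun i =>
    HasSubgaussianMGF.of_map (Y := fun S : Fin n → X => S i)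
      (measurable_pi_apply i).aemeasurable
      (by rwa [(measurePreserving_eval (fun _ : Fin n => g) i).map_eq])
  simpa using HasSubgaussianMGF.measure_sum_ge_le_of_iIndepFun hindep (s := Finset.univ)
    (fun i _ => hsubG i) hε

open Real in
lemma measureReal_le_abs_empiricalFreq_sub_le (g : Measure X) [IsProbabilityMeasure g]
    {B : Set X} (hB : MeasurableSet B) {t : ℝ} (ht : 0 ≤ t) :
    (Measure.pi fun _ : Fin n => g).real {S | t ≤ |empiricalFreq B S - g.real B|} ≤
      2 * exp (-2 * n * t ^ 2) := by
  set h : X → ℝ := fun x => B.indicator 1 x - g.real B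
  have hh : Measurable h := (measurable_const.indicator hB).sub_const _
  have hsubG : HasSubgaussianMGF h (1 / 4) g := by
    have := hasSubgaussianMGF_of_mem_Icc (μ := g) (a := 0) (b := 1)
      (measurable_const.indicator hB).aemeasurable
      (ae_of_all _ fun x => ⟨Set.indicator_nonneg (fun _ _ => zero_le_one) x,
        Set.indicator_le_self' (fun _ _ => zero_le_one) x⟩)
    convert this using 2
    · rw [integral_indicator_const _ hB]
      simp [h, Pi.one_def]
    · norm_num
  have hexp : -(n * t) ^ 2 / (2 * (n * ((1 / 4 : NNReal) : ℝ))) = -2 * n * t ^ 2 := by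
    rcases Nat.eq_zero_or_pos n with rfl | hn
    · simp
    · push_cast; field_simp; ring
  have hsplit : {S : Fin n → X | t ≤ |empiricalFreq B S - g.real B|} ⊆
      {S | n * t ≤ ∑ i, h (S i)} ∪ {S | n * t ≤ ∑ i, (-h) (S i)} := by
    intro S hS
    simp only [h, Pi.neg_apply, Finset.sum_neg_distrib, sum_indicator_sub_eq_mul,
      Set.mem_union, Set.mem_ofPred_eq] at hS ⊢
    rcases le_abs'.1 hS with hle | hle
    · right; nlinarith [(Nat.cast_nonneg n : (0:ℝ) ≤ n)]
    · left; exact mul_le_mul_of_nonneg_left hle (Nat.cast_nonneg n)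
  have hnt : 0 ≤ (n : ℝ) * t := by positivity
  calc _ ≤ _ := measureReal_mono hsplit
    _ ≤ _ := measureReal_union_le _ _
    _ ≤ exp (-2 * n * t ^ 2) + exp (-2 * n * t ^ 2) := by
      rw [← hexp]
      exact add_le_add (measureReal_le_sum_comp_eval_le g hh hsubG hnt)
        (measureReal_le_sum_comp_eval_le g hh.neg hsubG.neg hnt)
    _ = _ := by ring

end Empirical

open Real in
lemma measureReal_exists_le_abs_empiricalFreq_sub_le {X J : Type*} [MeasurableSpace X]
    [Fintype J] {n : ℕ} (g : Measure X) [IsProbabilityMeasure g] {B : J → Set X}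
    (hB : ∀ j, MeasurableSet (B j)) {t : ℝ} (ht : 0 ≤ t) :
    (Measure.pi fun _ : Fin n => g).real
        {S | ∃ j, t ≤ |empiricalFreq (B j) S - g.real (B j)|} ≤
      Fintype.card J * (2 * exp (-2 * n * t ^ 2)) := by
  rw [Set.ofPred_exists]
  refine (measureReal_iUnion_fintype_le _).trans ?_
  simpa using Finset.sum_le_sum fun j (_ : j ∈ Finset.univ) =>
    measureReal_le_abs_empiricalFreq_sub_le (n := n) g (hB j) ht

section Argmin

variable {ι : Type*} [Fintype ι] [LinearOrder ι] [Nonempty ι]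

noncomputable def firstArgmin (v : ι → ℝ) : ι :=
  (Finset.univ.filter fun k => ∀ j, v k ≤ v j).min' <| by
    obtain ⟨k, hk⟩ := Finite.exists_min v
    exact ⟨k, by simpa using hk⟩

lemma firstArgmin_le (v : ι → ℝ) (j : ι) : v (firstArgmin v) ≤ v j :=
  (Finset.mem_filter.1 (Finset.min'_mem (Finset.univ.filter fun k => ∀ j, v k ≤ v j) _)).2 j

lemma firstArgmin_le_of_forall_le {v : ι → ℝ} {k : ι} (hk : ∀ j, v k ≤ v j) :
    firstArgmin v ≤ k :=
  Finset.min'_le _ k (by simpa using hk)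

lemma firstArgmin_eq_iff {v : ι → ℝ} {k : ι} :
    firstArgmin v = k ↔ (∀ j, v k ≤ v j) ∧ ∀ j < k, ∃ j', v j' < v j := by
  constructor
  · rintro rfl
    refine ⟨firstArgmin_le v, fun j hj => ?_⟩
    by_contra! hmin
    exact (firstArgmin_le_of_forall_le hmin).not_gt hj
  · rintro ⟨hk, hlt⟩
    refine (firstArgmin_le_of_forall_le hk).antisymm (not_lt.1 fun hless => ?_)
    obtain ⟨j', hj'⟩ := hlt _ hless
    exact (firstArgmin_le v j').not_gt hj'

lemma measurableSet_firstArgmin_preimage (s : Set ι) :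
    MeasurableSet (firstArgmin ⁻¹' s : Set (ι → ℝ)) := by
  rw [← Set.biUnion_preimage_singleton]
  refine MeasurableSet.biUnion s.to_countable fun k _ => ?_
  simp only [Set.preimage, Set.mem_singleton_iff, firstArgmin_eq_iff, Set.ofPred_and,
    Set.ofPred_forall, Set.ofPred_exists]
  exact .inter
    (.iInter fun j => measurableSet_le (measurable_pi_apply k) (measurable_pi_apply j))
    (.iInter fun j => .iInter fun _ => .iUnion fun j' =>
      measurableSet_lt (measurable_pi_apply j') (measurable_pi_apply j))

end Argmin

section MinimumDistance

variable {X J : Type*} [MeasurableSpace X] [Fintype J] [Nonempty J] {n : ℕ}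

noncomputable def testDist (μ : Measure X) (A : J → Set X) (S : Fin n → X) : ℝ :=
  Finset.univ.sup' Finset.univ_nonempty fun j => |μ.real (A j) - empiricalFreq (A j) S|

lemma abs_measureReal_sub_empiricalFreq_le_testDist (μ : Measure X) (A : J → Set X)
    (S : Fin n → X) (j : J) : |μ.real (A j) - empiricalFreq (A j) S| ≤ testDist μ A S :=
  Finset.le_sup' (fun j => |μ.real (A j) - empiricalFreq (A j) S|) (Finset.mem_univ j)

lemma testDist_le_tvDist_add (μ g : Measure X) [IsFiniteMeasure μ] [IsFiniteMeasure g]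
    {A : J → Set X} (hA : ∀ j, MeasurableSet (A j)) {S : Fin n → X} {ε : ℝ}
    (hS : ∀ j, |empiricalFreq (A j) S - g.real (A j)| ≤ ε) :
    testDist μ A S ≤ tvDist μ g + ε :=
  Finset.sup'_le _ _ fun j _ => (abs_sub_le _ (g.real (A j)) _).trans <|
    add_le_add (abs_measureReal_sub_le_tvDist μ g (hA j))
      (abs_sub_comm (g.real (A j)) _ ▸ hS j)

lemma measurable_testDist (μ : Measure X) {A : J → Set X} (hA : ∀ j, MeasurableSet (A j)) :
    Measurable (testDist (n := n) μ A) := by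
  have : testDist (n := n) μ A = Finset.univ.sup' Finset.univ_nonempty
      fun j S => |μ.real (A j) - empiricalFreq (A j) S| := by
    funext S
    rw [Finset.sup'_apply]
    rfl
  rw [this]
  exact Finset.measurable_sup' _ fun j _ => ((measurable_empiricalFreq (hA j)).const_sub _).abs

variable {ι : Type*} [Fintype ι] [LinearOrder ι] [Nonempty ι]

noncomputable def minDistEstimate (κ : ι → Measure X) (A : J → Set X) (S : Fin n → X) : ι :=
  firstArgmin fun k => testDist (κ k) A S

lemma measurableSet_minDistEstimate_preimage (κ : ι → Measure X) {A : J → Set X}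
    (hA : ∀ j, MeasurableSet (A j)) (s : Set ι) :
    MeasurableSet (minDistEstimate (n := n) κ A ⁻¹' s) :=
  (measurableSet_firstArgmin_preimage s).preimage
    (measurable_pi_lambda _ fun k => measurable_testDist (κ k) hA)

lemma tvDist_minDistEstimate_le (κ : ι → Measure X) [∀ k, IsFiniteMeasure (κ k)]
    (g : Measure X) [IsFiniteMeasure g] {A : ι × ι → Set X} (hAm : ∀ p, MeasurableSet (A p))
    {η : ℝ}
    (hA : ∀ k l, tvDist (κ k) (κ l) ≤ |(κ k).real (A (k, l)) - (κ l).real (A (k, l))| + η)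
    {S : Fin n → X} {ε : ℝ} (hS : ∀ p, |empiricalFreq (A p) S - g.real (A p)| ≤ ε) (l : ι) :
    tvDist (κ (minDistEstimate κ A S)) g ≤ 3 * tvDist (κ l) g + 2 * ε + η := by
  set k := minDistEstimate κ A S
  have hmin : testDist (κ k) A S ≤ testDist (κ l) A S :=
    firstArgmin_le (fun k => testDist (κ k) A S) l
  have hl : testDist (κ l) A S ≤ tvDist (κ l) g + ε := testDist_le_tvDist_add _ g hAm hS
  have hsep : |(κ k).real (A (k, l)) - (κ l).real (A (k, l))| ≤
      testDist (κ k) A S + testDist (κ l) A S :=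
    (abs_sub_le _ (empiricalFreq (A (k, l)) S) _).trans <| add_le_add
      (abs_measureReal_sub_empiricalFreq_le_testDist _ A S _)
      (abs_sub_comm ((κ l).real (A (k, l))) _ ▸
        abs_measureReal_sub_empiricalFreq_le_testDist _ A S _)
  calc tvDist (κ k) g ≤ tvDist (κ k) (κ l) + tvDist (κ l) g := tvDist_triangle _ _ _
    _ ≤ _ := by linarith [hA k l]

end MinimumDistance

lemma ofReal_one_sub_le_of_compl_subset {Ω : Type*} [MeasurableSpace Ω] (μ : Measure Ω)
    [IsProbabilityMeasure μ] {B G : Set Ω} {β : ℝ} (hB : μ.real B ≤ β) (hBG : Bᶜ ⊆ G) :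
    ENNReal.ofReal (1 - β) ≤ μ G := by
  rw [ENNReal.ofReal_le_iff_le_toReal (measure_ne_top μ G), ← measureReal_def]
  have : 1 ≤ μ.real B + μ.real G := by
    rw [← probReal_univ (μ := μ), ← Set.compl_subset_iff_union.1 hBG]
    exact measureReal_union_le B G
  linarith

open Real in
lemma sq_mul_two_mul_exp_le {N n : ℕ} (hN : 2 ≤ N) {α β : ℝ} (hα : 0 < α) (hβ0 : 0 < β)
    (hβ1 : β < 1) (hn : 24 * (log N + log (1 / β)) / α ^ 2 ≤ n) :
    (N : ℝ) ^ 2 * (2 * exp (-2 * n * (α / 4) ^ 2)) ≤ β := by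
  have hN0 : (0 : ℝ) < N := by positivity
  have hlogN : log 2 ≤ log N := log_le_log two_pos (by exact_mod_cast hN)
  have hlogβ : log β < 0 := log_neg hβ0 hβ1
  have hn' : 24 * (log N - log β) ≤ n * α ^ 2 := by
    rwa [one_div, log_inv, ← sub_eq_add_neg, div_le_iff₀ (by positivity)] at hn
  calc (N : ℝ) ^ 2 * (2 * exp (-2 * n * (α / 4) ^ 2))
      = exp (log (N ^ 2 * 2) + -(n * α ^ 2 / 8)) := by
        rw [exp_add, exp_log (by positivity)]
        ring_nf
    _ ≤ exp (log β) := exp_le_exp.2 <| by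
        rw [log_mul (by positivity) two_ne_zero, log_pow]
        push_cast
        linarith
    _ = β := exp_log hβ0

theorem statement14 :
    ∃ c : ℝ, 0 < c ∧ ∀ (X : Type) (_ : MeasurableSpace X) (F : Set (Measure X)),
      F.Nonempty → F.Finite → (∀ f ∈ F, IsProbabilityMeasure f) →
      ∀ α β : ℝ, α ∈ Set.Ioo (0 : ℝ) 1 → β ∈ Set.Ioo (0 : ℝ) 1 →
      ∀ n : ℕ, c * (Real.log F.ncard + Real.log (1 / β)) / α ^ 2 ≤ n →
      ∃ T : (Fin n → X) → Measure X,
        (∀ S, T S ∈ F) ∧ (∀ μ : Measure X, MeasurableSet {S | T S = μ}) ∧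
        ∀ g : Measure X, IsProbabilityMeasure g →
          ENNReal.ofReal (1 - β) ≤
            Measure.pi (fun _ : Fin n => g) {S | tvDist (T S) g ≤ 3 * tvDistSet g F + α} := by
  refine ⟨24, by norm_num, ?_⟩
  intro X _ F hFne hFfin hFprob α β ⟨hα0, _⟩ ⟨hβ0, hβ1⟩ n hn
  have := hFfin.fintype
  have := hFne.to_subtype
  let _ : LinearOrder F := LinearOrder.lift' _ (Fintype.equivFin F).injective
  have : ∀ f : F, IsProbabilityMeasure f.1 := fun f => hFprob f f.2
  choose A hAm hA using fun p : F × F =>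
    exists_measurableSet_tvDist_lt p.1.1 p.2.1 (half_pos hα0)
  refine ⟨fun S => (minDistEstimate Subtype.val A S).1, fun S => Subtype.prop _,
    fun μ => measurableSet_minDistEstimate_preimage Subtype.val hAm {f : F | f.1 = μ},
    fun g hg => ?_⟩
  obtain ⟨f, hfF, hf⟩ := exists_tvDist_eq_tvDistSet g hFne hFfin
  rw [← hf, tvDist_comm g f]
  rcases subsingleton_or_nontrivial F with hF | hF
  · refine ofReal_one_sub_le_of_compl_subset _ (B := ∅) (by simpa using hβ0.le) fun S _ => ?_
    change tvDist (minDistEstimate Subtype.val A S).1 g ≤ _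
    rw [Subsingleton.elim (minDistEstimate Subtype.val A S) ⟨f, hfF⟩]
    linarith [tvDist_nonneg f g]
  · refine ofReal_one_sub_le_of_compl_subset _
      (B := {S | ∃ p, α / 4 ≤ |empiricalFreq (A p) S - g.real (A p)|}) ?_ fun S hS => ?_
    · have hcard : Fintype.card F = F.ncard := by
        rw [← Nat.card_coe_set_eq, Nat.card_eq_fintype_card]
      refine (measureReal_exists_le_abs_empiricalFreq_sub_le g hAm (by positivity)).trans ?_
      rw [Fintype.card_prod, hcard, Nat.cast_mul, ← sq]
      exact sq_mul_two_mul_exp_le (hcard ▸ Fintype.one_lt_card) hα0 hβ0 hβ1 hn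
    · simp only [Set.mem_compl_iff, Set.mem_ofPred_eq, not_exists, not_le] at hS
      have := tvDist_minDistEstimate_le Subtype.val g hAm (fun k l => (hA (k, l)).le)
        (fun p => (hS p).le) ⟨f, hfF⟩
      simp only [Set.mem_ofPred_eq]
      linarith
end

section
/- Let ε > 0, δ ∈ (0,1), Δ > 0, and set R = (Δ/ε)·log(1 + (e^ε − 1)/(2δ)). Let ν be the measure on ℝ with Lebesgue density f(x) = (ε/(2Δ(1 − e^{−εR/Δ})))·e^{−ε|x|/Δ} for x ∈ [−R, R] and f(x) = 0 for x ∉ [−R, R]. Then ν is a probability measure, and for every a ∈ ℝ with |a| ≤ Δ and every Borel set E ⊆ ℝ, both ν(E) ≤ e^ε·ν_a(E) + δ and ν_a(E) ≤ e^ε·ν(E) + δ hold, where ν_a denotes the pushforward of ν under the translation x ↦ x + a. -/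
/-!
With `c = ε / Δ`, the density `C e^{-c|x|}` on `[-R, R]` changes by a factor at most
`e^{c|a|} ≤ e^ε` under a shift by `a`, because `|x - a| ≤ |x| + |a|`. Hence `ν` is dominated by
`e^ε` times its translate, except on the points of `[-R, R]` where the translated density vanishes.
These form an interval of length `|a|` at one end of `[-R, R]`, of mass at most
`(e^{c|a|} - 1) / (2 (e^{cR} - 1))`, and `R` is chosen exactly so that this is `δ` when `c|a| = ε`.
The reverse inequality is the same one for the shift by `-a`.
-/

open MeasureTheory Set Real

open scoped ENNReal

theorem integral_exp_mul {k : ℝ} (hk : k ≠ 0) (a b : ℝ) :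
    ∫ x in a..b, exp (k * x) = (exp (k * b) - exp (k * a)) / k := by
  have hderiv (x : ℝ) : HasDerivAt (fun y => exp (k * y) / k) (exp (k * x)) x := by
    simpa [mul_div_assoc, mul_div_cancel_left₀ _ hk, mul_comm] using
      (((hasDerivAt_id x).const_mul k).exp).div_const k
  rw [intervalIntegral.integral_eq_sub_of_hasDerivAt (fun x _ => hderiv x)
    ((by fun_prop : Continuous fun x => exp (k * x)).intervalIntegrable a b), sub_div]

section WithDensity

variable {α : Type*} [MeasurableSpace α] {μ : Measure α}

theorem withDensity_apply_le_mul_add {f g h : α → ℝ≥0∞} {k : ℝ≥0∞} (hg : Measurable g)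
    (hfg : ∀ x, f x ≤ k * g x + h x) {E : Set α} (hE : MeasurableSet E) :
    μ.withDensity f E ≤ k * μ.withDensity g E + ∫⁻ x, h x ∂μ := by
  rw [withDensity_apply _ hE, withDensity_apply _ hE]
  calc ∫⁻ x in E, f x ∂μ ≤ ∫⁻ x in E, k * g x + h x ∂μ := lintegral_mono hfg
    _ = k * ∫⁻ x in E, g x ∂μ + ∫⁻ x in E, h x ∂μ := by
      rw [lintegral_add_left (hg.const_mul k), lintegral_const_mul k hg]
    _ ≤ k * ∫⁻ x in E, g x ∂μ + ∫⁻ x, h x ∂μ :=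
      add_le_add_right (setLIntegral_le_lintegral E h) _

end WithDensity

section Translation

variable {G : Type*} [MeasurableSpace G] [AddGroup G] [MeasurableAdd G] {μ : Measure G}

theorem map_add_right_withDensity [μ.IsAddRightInvariant] (f : G → ℝ≥0∞) (a : G) :
    (μ.withDensity f).map (· + a) = μ.withDensity fun x => f (x - a) := by
  ext E hE
  have hpre : MeasurableSet ((· + a) ⁻¹' E) := measurable_add_const a hE
  rw [Measure.map_apply (measurable_add_const a) hE, withDensity_apply _ hpre,
    withDensity_apply _ hE, ← lintegral_indicator hpre, ← lintegral_indicator hE]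
  conv_rhs => rw [← lintegral_add_right_eq_self _ a]
  congr with x
  by_cases hx : x + a ∈ E <;> simp [hx]

theorem map_add_apply_le_of_le_map_add_neg {k d : ℝ≥0∞} (a : G)
    (h : ∀ E, MeasurableSet E → μ E ≤ k * μ.map (· + -a) E + d) {E : Set G}
    (hE : MeasurableSet E) : μ.map (· + a) E ≤ k * μ E + d := by
  have hpre : MeasurableSet ((· + a) ⁻¹' E) := measurable_add_const a hE
  have hback : μ.map (· + -a) ((· + a) ⁻¹' E) = μ E := by
    simp [Measure.map_apply (measurable_add_const (-a)) hpre, preimage_preimage]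
  simpa [Measure.map_apply (measurable_add_const a) hE, hback] using h _ hpre

end Translation

section TruncLaplace

noncomputable def truncLaplacePDF (c R : ℝ) : ℝ → ℝ :=
  (Icc (-R) R).indicator fun x => c / (2 * (1 - exp (-(c * R)))) * exp (-(c * |x|))

noncomputable def truncLaplace (c R : ℝ) : Measure ℝ :=
  volume.withDensity fun x => ENNReal.ofReal (truncLaplacePDF c R x)

variable {c R : ℝ}

theorem truncLaplace_normalizer_nonneg (hc : 0 ≤ c) (hR : 0 ≤ R) :
    0 ≤ c / (2 * (1 - exp (-(c * R)))) := by
  have : exp (-(c * R)) ≤ 1 := exp_le_one_iff.2 (neg_nonpos.2 (mul_nonneg hc hR))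
  exact div_nonneg hc (by linarith)

theorem truncLaplacePDF_nonneg (hc : 0 ≤ c) (hR : 0 ≤ R) (x : ℝ) :
    0 ≤ truncLaplacePDF c R x :=
  indicator_nonneg (fun _ _ => mul_nonneg (truncLaplace_normalizer_nonneg hc hR) (exp_pos _).le) x

theorem measurable_truncLaplacePDF : Measurable (truncLaplacePDF c R) :=
  Measurable.indicator (by fun_prop) measurableSet_Icc

theorem integrable_truncLaplacePDF : Integrable (truncLaplacePDF c R) :=
  (Continuous.integrableOn_Icc (by fun_prop)).integrable_indicator measurableSet_Icc

theorem integral_truncLaplacePDF (hc : 0 < c) (hR : 0 < R) :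
    ∫ x, truncLaplacePDF c R x = 1 := by
  set C := c / (2 * (1 - exp (-(c * R))))
  set g : ℝ → ℝ := fun x => C * exp (-(c * |x|))
  have hg : Continuous g := by fun_prop
  have hright : ∫ x in (0 : ℝ)..R, g x = C * ((1 - exp (-(c * R))) / c) := by
    rw [intervalIntegral.integral_congr (g := fun x => C * exp (-c * x)) fun x hx => ?_,
      intervalIntegral.integral_const_mul, integral_exp_mul (neg_ne_zero.2 hc.ne')]
    · rw [neg_mul, mul_zero, exp_zero]
      field_simp
      ring
    · rw [uIcc_of_le hR.le] at hx
      simp [g, abs_of_nonneg hx.1]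
  have hleft : ∫ x in -R..0, g x = ∫ x in (0 : ℝ)..R, g x := by
    simpa [g] using (intervalIntegral.integral_comp_neg (a := 0) (b := R) g).symm
  have hu : exp (-(c * R)) < 1 := exp_lt_one_iff.2 (neg_lt_zero.2 (mul_pos hc hR))
  rw [truncLaplacePDF, integral_indicator measurableSet_Icc, integral_Icc_eq_integral_Ioc,
    ← intervalIntegral.integral_of_le (by linarith),
    ← intervalIntegral.integral_add_adjacent_intervals (hg.intervalIntegrable _ 0)
      (hg.intervalIntegrable 0 _), hleft, hright]
  have : 1 - exp (-(c * R)) ≠ 0 := (sub_pos.2 hu).ne'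
  simp only [C]
  field_simp
  ring

theorem truncLaplacePDF_le_exp_mul (hc : 0 ≤ c) {a x : ℝ} (hx : x - a ∈ Icc (-R) R) :
    truncLaplacePDF c R x ≤ exp (c * |a|) * truncLaplacePDF c R (x - a) := by
  have hR : 0 ≤ R := by linarith [hx.1, hx.2]
  by_cases hx' : x ∈ Icc (-R) R
  · rw [truncLaplacePDF, indicator_of_mem hx', indicator_of_mem hx, mul_left_comm, ← exp_add]
    gcongr
    · exact truncLaplace_normalizer_nonneg hc hR
    · linarith [mul_le_mul_of_nonneg_left (abs_sub x a) hc]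
  · rw [truncLaplacePDF, indicator_of_notMem hx']
    exact mul_nonneg (exp_pos _).le (truncLaplacePDF_nonneg hc hR _)

theorem truncLaplacePDF_le_exp_mul_add (hc : 0 ≤ c) (a x : ℝ) :
    truncLaplacePDF c R x ≤ exp (c * |a|) * truncLaplacePDF c R (x - a)
      + {y | y - a ∉ Icc (-R) R}.indicator (truncLaplacePDF c R) x := by
  by_cases hx : x - a ∈ Icc (-R) R
  · rw [indicator_of_notMem (by simpa using hx), add_zero]
    exact truncLaplacePDF_le_exp_mul hc hx
  · rw [indicator_of_mem (by simpa using hx), truncLaplacePDF, indicator_of_notMem hx, mul_zero,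
      zero_add]

theorem truncLaplacePDF_neg (x : ℝ) : truncLaplacePDF c R (-x) = truncLaplacePDF c R x := by
  simp only [truncLaplacePDF, indicator_apply, abs_neg, mem_Icc, neg_le_neg_iff, neg_le, and_comm]

theorem integral_truncLaplacePDF_left_tail_le (hc : 0 < c) (hR : 0 < R) {b : ℝ}
    (hb : 0 ≤ b) :
    ∫ x in -R..-R + b, truncLaplacePDF c R x ≤ (exp (c * b) - 1) / (2 * (exp (c * R) - 1)) := by
  set C := c / (2 * (1 - exp (-(c * R))))
  have hbound : ∀ x, truncLaplacePDF c R x ≤ C * exp (c * x) := by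
    intro x
    by_cases hx : x ∈ Icc (-R) R
    · rw [truncLaplacePDF, indicator_of_mem hx]
      gcongr
      · exact truncLaplace_normalizer_nonneg hc.le hR.le
      · linarith [mul_le_mul_of_nonneg_left (neg_abs_le x) hc.le]
    · rw [truncLaplacePDF, indicator_of_notMem hx]
      exact mul_nonneg (truncLaplace_normalizer_nonneg hc.le hR.le) (exp_pos _).le
  have hE : 1 < exp (c * R) := one_lt_exp_iff.2 (mul_pos hc hR)
  calc ∫ x in -R..-R + b, truncLaplacePDF c R x ≤ ∫ x in -R..-R + b, C * exp (c * x) :=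
        intervalIntegral.integral_mono_on (by linarith)
          integrable_truncLaplacePDF.intervalIntegrable
          (Continuous.intervalIntegrable (by fun_prop) _ _) fun x _ => hbound x
    _ = (exp (c * b) - 1) / (2 * (exp (c * R) - 1)) := by
      rw [intervalIntegral.integral_const_mul, integral_exp_mul hc.ne']
      have : exp (c * R) - 1 ≠ 0 := by linarith
      have : 1 - (exp (c * R))⁻¹ ≠ 0 := by
        rw [sub_ne_zero]; exact (inv_lt_one_of_one_lt₀ hE).ne'
      simp only [C, mul_add, mul_neg, exp_add, exp_neg]
      field_simp

theorem setIntegral_truncLaplacePDF_tail_le (hc : 0 < c) (hR : 0 < R) (a : ℝ) :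
    ∫ x in {y | y - a ∉ Icc (-R) R}, truncLaplacePDF c R x
      ≤ (exp (c * |a|) - 1) / (2 * (exp (c * R) - 1)) := by
  set T := {y | y - a ∉ Icc (-R) R}
  have hT : MeasurableSet T := (measurableSet_Icc.preimage (measurable_sub_const a)).compl
  have hsupp :
      ∫ x in T, truncLaplacePDF c R x = ∫ x in T ∩ Icc (-R) R, truncLaplacePDF c R x :=
    setIntegral_eq_of_subset_of_forall_sdiff_eq_zero hT inter_subset_left
      fun x hx => indicator_of_notMem (fun h => hx.2 ⟨hx.1, h⟩) _
  have hmono : ∀ {u v : ℝ}, u ≤ v → T ∩ Icc (-R) R ⊆ Icc u v →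
      ∫ x in T ∩ Icc (-R) R, truncLaplacePDF c R x ≤ ∫ x in u..v, truncLaplacePDF c R x := by
    intro u v huv hsub
    rw [intervalIntegral.integral_of_le huv, ← integral_Icc_eq_integral_Ioc]
    exact setIntegral_mono_set integrable_truncLaplacePDF.integrableOn
      (ae_of_all _ (truncLaplacePDF_nonneg hc.le hR.le)) hsub.eventuallyLE
  rw [hsupp]
  rcases le_total 0 a with ha | ha
  · calc _ ≤ ∫ x in -R..-R + a, truncLaplacePDF c R x :=
          hmono (by linarith) fun x ⟨hxT, hx⟩ =>
            ⟨hx.1, by by_contra! h; exact hxT ⟨by linarith, by linarith [hx.2]⟩⟩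
      _ ≤ _ := by
          simpa [abs_of_nonneg ha] using integral_truncLaplacePDF_left_tail_le hc hR ha
  · calc _ ≤ ∫ x in R + a..R, truncLaplacePDF c R x :=
          hmono (by linarith) fun x ⟨hxT, hx⟩ =>
            ⟨by by_contra! h; exact hxT ⟨by linarith [hx.1], by linarith⟩, hx.2⟩
      _ = ∫ x in -R..-R + -a, truncLaplacePDF c R x := by
          simpa only [truncLaplacePDF_neg, neg_add] using
            intervalIntegral.integral_comp_neg (a := R + a) (b := R) (truncLaplacePDF c R)
      _ ≤ _ := by
          simpa [abs_of_nonpos ha] using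
            integral_truncLaplacePDF_left_tail_le hc hR (neg_nonneg.2 ha)

theorem isProbabilityMeasure_truncLaplace (hc : 0 < c) (hR : 0 < R) :
    IsProbabilityMeasure (truncLaplace c R) := by
  constructor
  rw [truncLaplace, withDensity_apply _ MeasurableSet.univ, Measure.restrict_univ,
    ← ofReal_integral_eq_lintegral_ofReal integrable_truncLaplacePDF
      (ae_of_all _ (truncLaplacePDF_nonneg hc.le hR.le)),
    integral_truncLaplacePDF hc hR, ENNReal.ofReal_one]

theorem truncLaplace_apply_le (hc : 0 < c) (hR : 0 < R) (a : ℝ) {E : Set ℝ}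
    (hE : MeasurableSet E) :
    truncLaplace c R E ≤ ENNReal.ofReal (exp (c * |a|)) * (truncLaplace c R).map (· + a) E
      + ENNReal.ofReal ((exp (c * |a|) - 1) / (2 * (exp (c * R) - 1))) := by
  set T := {y | y - a ∉ Icc (-R) R}
  have hT : MeasurableSet T := (measurableSet_Icc.preimage (measurable_sub_const a)).compl
  have hpdf := truncLaplacePDF_nonneg hc.le hR.le
  have hpoint (x : ℝ) : ENNReal.ofReal (truncLaplacePDF c R x)
      ≤ ENNReal.ofReal (exp (c * |a|)) * ENNReal.ofReal (truncLaplacePDF c R (x - a))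
        + ENNReal.ofReal (T.indicator (truncLaplacePDF c R) x) := by
    rw [← ENNReal.ofReal_mul (exp_pos _).le, ← ENNReal.ofReal_add
      (mul_nonneg (exp_pos _).le (hpdf _)) (indicator_nonneg (fun y _ => hpdf y) x)]
    exact ENNReal.ofReal_le_ofReal (truncLaplacePDF_le_exp_mul_add hc.le a x)
  have htail : ∫⁻ x, ENNReal.ofReal (T.indicator (truncLaplacePDF c R) x)
      ≤ ENNReal.ofReal ((exp (c * |a|) - 1) / (2 * (exp (c * R) - 1))) := by
    rw [← ofReal_integral_eq_lintegral_ofReal (integrable_truncLaplacePDF.indicator hT)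
      (ae_of_all _ (indicator_nonneg (fun y _ => hpdf y))), integral_indicator hT]
    exact ENNReal.ofReal_le_ofReal (setIntegral_truncLaplacePDF_tail_le hc hR a)
  have hmeas : Measurable fun x => ENNReal.ofReal (truncLaplacePDF c R (x - a)) :=
    (measurable_truncLaplacePDF.comp (measurable_sub_const a)).ennreal_ofReal
  rw [truncLaplace, map_add_right_withDensity]
  exact (withDensity_apply_le_mul_add hmeas hpoint hE).trans (by gcongr)


theorem truncLaplacePDF_div_apply (ε Δ R x : ℝ) :
    truncLaplacePDF (ε / Δ) R x = if x ∈ Icc (-R) R then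
      ε / (2 * Δ * (1 - exp (-ε * R / Δ))) * exp (-ε * |x| / Δ) else 0 := by
  rw [truncLaplacePDF, indicator_apply, show -ε * R / Δ = -(ε / Δ * R) by ring,
    show -ε * |x| / Δ = -(ε / Δ * |x|) by ring, div_div, mul_left_comm Δ 2, ← mul_assoc]

theorem truncLaplace_tail_le_of_exp_eq {s t ε δ : ℝ} (hε : 0 < ε) (hδ : 0 < δ) (hs : s ≤ ε)
    (ht : exp t = 1 + (exp ε - 1) / (2 * δ)) :
    (exp s - 1) / (2 * (exp t - 1)) ≤ δ := by
  have hε1 : 0 < exp ε - 1 := by linarith [add_one_lt_exp hε.ne']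
  rw [ht, add_sub_cancel_left, div_le_iff₀ (by positivity)]
  field_simp
  linarith [exp_le_exp.2 hs]

end TruncLaplace

theorem statement15 (ε δ Δ : ℝ) (hε : 0 < ε) (hδ : δ ∈ Set.Ioo (0 : ℝ) 1) (hΔ : 0 < Δ)
    (R : ℝ) (hR : R = Δ / ε * Real.log (1 + (Real.exp ε - 1) / (2 * δ)))
    (f : ℝ → ℝ)
    (hf : f = fun x => if x ∈ Set.Icc (-R) R then
      ε / (2 * Δ * (1 - Real.exp (-ε * R / Δ))) * Real.exp (-ε * |x| / Δ) else 0)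
    (ν : Measure ℝ) (hν : ν = volume.withDensity fun x => ENNReal.ofReal (f x)) :
    IsProbabilityMeasure ν ∧
    ∀ a : ℝ, |a| ≤ Δ → ∀ E : Set ℝ, MeasurableSet E →
      ν E ≤ ENNReal.ofReal (Real.exp ε) * (ν.map (fun x => x + a)) E + ENNReal.ofReal δ ∧
      (ν.map (fun x => x + a)) E ≤ ENNReal.ofReal (Real.exp ε) * ν E + ENNReal.ofReal δ := by
  obtain ⟨hδ, -⟩ := hδ
  have hc : 0 < ε / Δ := div_pos hε hΔ
  have hgap : 0 < (exp ε - 1) / (2 * δ) :=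
    div_pos (by linarith [add_one_lt_exp hε.ne']) (by positivity)
  have hexpR : exp (ε / Δ * R) = 1 + (exp ε - 1) / (2 * δ) := by
    rw [hR, ← mul_assoc, show ε / Δ * (Δ / ε) = 1 by field_simp, one_mul, exp_log (by linarith)]
  have hR0 : 0 < R := pos_of_mul_pos_right (one_lt_exp_iff.1 (by linarith)) hc.le
  have hν' : ν = truncLaplace (ε / Δ) R := by
    simp_rw [hν, hf, truncLaplace, truncLaplacePDF_div_apply]
  have hshift : ∀ a, |a| ≤ Δ → ∀ E, MeasurableSet E →
      ν E ≤ ENNReal.ofReal (exp ε) * ν.map (· + a) E + ENNReal.ofReal δ := by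
    intro a ha E hE
    have hca : ε / Δ * |a| ≤ ε :=
      (mul_le_mul_of_nonneg_left ha hc.le).trans_eq (div_mul_cancel₀ ε hΔ.ne')
    rw [hν']
    refine (truncLaplace_apply_le hc hR0 a hE).trans ?_
    gcongr
    exact truncLaplace_tail_le_of_exp_eq hε hδ hca hexpR
  exact ⟨hν' ▸ isProbabilityMeasure_truncLaplace hc hR0, fun a ha E hE =>
    ⟨hshift a ha E hE, map_add_apply_le_of_le_map_add_neg a (hshift (-a) (by rwa [abs_neg])) hE⟩⟩
end
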